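/- arXiv:2209.01703 — 4 statements merged into one kernel-verified Lean document; each statement's English description precedes it below -/
import Mathlib

section
/- Let G be a simple graph on M vertices with at least one edge, let L be its graph Laplacian matrix over the reals, and let α > 0. Let S := (I_M + αL)⁻¹ be the graph filter. Let K_c be a d×d real positive semidefinite matrix with positive trace and K an n×n real positive semidefinite matrix with positive trace. Then tr((K_c ⊗ I_M) ⊗ K) > tr((K_c ⊗ S²) ⊗ K), i.e., the trace of the initial covariance of the recursive GP without graph information strictly exceeds that of the recursive GP with graph information (Theorem 1). -/
/-!
Write `A = 1 + αL` and `S = A⁻¹`. Then `1 - S² = S (A² - 1) S` with `A² - 1 = 2αL + α²L²`,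
which is positive semidefinite and, as soon as `L ≠ 0`, nonzero. Hence `1 - S²` is positive
semidefinite and nonzero, so `tr (S²) < tr 1`; the trace of a Kronecker product is the product of
the traces, and multiplying by `tr K_c > 0` and `tr K > 0` preserves the strict inequality.
-/

open Matrix Kronecker

namespace Matrix

open scoped ComplexOrder

variable {n 𝕜 : Type*} [Fintype n] [RCLike 𝕜]

theorem PosSemidef.trace_pos {A : Matrix n n 𝕜} (hA : A.PosSemidef) (h : A ≠ 0) :
    0 < A.trace :=
  hA.trace_nonneg.lt_of_ne (Ne.symm (mt hA.trace_eq_zero_iff.mp h))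

variable [DecidableEq n]

theorem one_sub_inv_mul_inv_eq {A : Matrix n n 𝕜} (hA : IsUnit A.det) :
    1 - A⁻¹ * A⁻¹ = A⁻¹ * (A * A - 1) * A⁻¹ := by
  have : A⁻¹ * (A * A - 1) * A⁻¹ = (A⁻¹ * A) * (A * A⁻¹) - A⁻¹ * A⁻¹ := by noncomm_ring
  rw [this, nonsing_inv_mul _ hA, mul_nonsing_inv _ hA, one_mul]

theorem mul_one_sub_inv_mul_inv_mul {A : Matrix n n 𝕜} (hA : IsUnit A.det) :
    A * (1 - A⁻¹ * A⁻¹) * A = A * A - 1 := by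
  have : A * (1 - A⁻¹ * A⁻¹) * A = A * A - (A * A⁻¹) * (A⁻¹ * A) := by noncomm_ring
  rw [this, nonsing_inv_mul _ hA, mul_nonsing_inv _ hA, one_mul]

theorem one_add_smul_mul_self_sub_one (L : Matrix n n 𝕜) (α : ℝ) :
    (1 + α • L) * (1 + α • L) - 1 = (2 * α) • L + (α * α) • (L * L) := by
  simp only [add_mul, mul_add, one_mul, mul_one, smul_mul_assoc, mul_smul_comm]
  module

theorem trace_inv_one_add_smul_mul_self_lt {L : Matrix n n 𝕜} (hL : L.PosSemidef) (hL0 : L ≠ 0)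
    {α : ℝ} (hα : 0 < α) :
    ((1 + α • L)⁻¹ * (1 + α • L)⁻¹).trace < (1 : Matrix n n 𝕜).trace := by
  have hA : (1 + α • L).PosDef := PosDef.one.add_posSemidef (hL.smul hα.le)
  have hdet : IsUnit (1 + α • L).det := (isUnit_iff_isUnit_det _).mp hA.isUnit
  have hLL : (L * L).PosSemidef := by simpa [sq] using hL.pow 2
  have hD : ((1 + α • L) * (1 + α • L) - 1).PosSemidef := by
    rw [one_add_smul_mul_self_sub_one]
    exact (hL.smul (by positivity : (0 : ℝ) ≤ 2 * α)).add (hLL.smul (mul_self_nonneg α))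
  have hDne : (1 + α • L) * (1 + α • L) - 1 ≠ 0 := by
    intro h
    have htr := congrArg trace h
    rw [one_add_smul_mul_self_sub_one, trace_add, trace_smul, trace_smul, trace_zero] at htr
    exact (add_pos_of_pos_of_nonneg (smul_pos (by positivity) (hL.trace_pos hL0))
      (smul_nonneg (mul_self_nonneg α) hLL.trace_nonneg)).ne' htr
  have hB : (1 - (1 + α • L)⁻¹ * (1 + α • L)⁻¹).PosSemidef := by
    have h := hD.conjTranspose_mul_mul_same (1 + α • L)⁻¹
    rw [hA.inv.isHermitian.eq] at h
    rw [one_sub_inv_mul_inv_eq (A := 1 + α • L) hdet]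
    exact h
  have hBne : 1 - (1 + α • L)⁻¹ * (1 + α • L)⁻¹ ≠ 0 := fun h ↦ hDne <| by
    rw [← mul_one_sub_inv_mul_inv_mul hdet, h, mul_zero, zero_mul]
  simpa [trace_sub] using hB.trace_pos hBne

end Matrix

theorem SimpleGraph.lapMatrix_ne_zero {V R : Type*} [Fintype V] [DecidableEq V] [Ring R]
    [Nontrivial R] (G : SimpleGraph V) [DecidableRel G.Adj] (hG : G.edgeSet.Nonempty) :
    G.lapMatrix R ≠ 0 := by
  obtain ⟨⟨u, v⟩, huv⟩ := hG
  intro h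
  exact one_ne_zero (α := R) <| by
    simpa [lapMatrix, degMatrix, huv.ne, (mem_edgeSet G).mp huv] using congrFun (congrFun h u) v

theorem rgp_initial_covariance_trace_gt_general
    (M d n : ℕ) (G : SimpleGraph (Fin M)) [DecidableRel G.Adj]
    (hG : G.edgeSet.Nonempty) (α : ℝ) (hα : 0 < α)
    (Kc : Matrix (Fin d) (Fin d) ℝ) (hKctr : 0 < Kc.trace)
    (K : Matrix (Fin n) (Fin n) ℝ) (hKtr : 0 < K.trace)
    (L : Matrix (Fin M) (Fin M) ℝ) (hL : L = G.lapMatrix ℝ)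
    (S : Matrix (Fin M) (Fin M) ℝ) (hS : S = (1 + α • L)⁻¹) :
    ((Kc ⊗ₖ (S * S)) ⊗ₖ K).trace < ((Kc ⊗ₖ (1 : Matrix (Fin M) (Fin M) ℝ)) ⊗ₖ K).trace := by
  have hLpsd : L.PosSemidef := hL ▸ G.posSemidef_lapMatrix ℝ
  have hL0 : L ≠ 0 := hL ▸ G.lapMatrix_ne_zero hG
  have hlt : (S * S).trace < (1 : Matrix (Fin M) (Fin M) ℝ).trace :=
    hS ▸ trace_inv_one_add_smul_mul_self_lt hLpsd hL0 hα
  simp only [trace_kronecker]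
  exact mul_lt_mul_of_pos_right (mul_lt_mul_of_pos_left hlt hKctr) hKtr

/-- **Theorem 1 (RGP-G vs RGP initial covariance trace).**
For a simple graph `G` on `M` vertices with at least one edge, Laplacian `L`, `α > 0`,
graph filter `S = (I + αL)⁻¹`, and PSD kernel matrices `K_c`, `K` with positive traces,
the trace of `(K_c ⊗ I_M) ⊗ K` strictly exceeds that of `(K_c ⊗ S²) ⊗ K`. -/
theorem rgp_initial_covariance_trace_gt
    (M d n : ℕ) (G : SimpleGraph (Fin M)) [DecidableRel G.Adj]
    (hG : G.edgeSet.Nonempty) (α : ℝ) (hα : 0 < α)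
    (Kc : Matrix (Fin d) (Fin d) ℝ) (hKc : Kc.PosSemidef) (hKctr : 0 < Kc.trace)
    (K : Matrix (Fin n) (Fin n) ℝ) (hK : K.PosSemidef) (hKtr : 0 < K.trace)
    (L : Matrix (Fin M) (Fin M) ℝ) (hL : L = G.lapMatrix ℝ)
    (S : Matrix (Fin M) (Fin M) ℝ) (hS : S = (1 + α • L)⁻¹) :
    ((Kc ⊗ₖ (S * S)) ⊗ₖ K).trace < ((Kc ⊗ₖ (1 : Matrix (Fin M) (Fin M) ℝ)) ⊗ₖ K).trace :=
  rgp_initial_covariance_trace_gt_general M d n G hG α hα Kc hKctr K hKtr L hL S hS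
end

section
/- Let L and L_p be real symmetric positive semidefinite M×M matrices and α ≥ 0. Then ‖(I_M + αL)⁻¹ − (I_M + αL_p)⁻¹‖₂ ≤ α ‖L − L_p‖₂, where ‖·‖₂ is the spectral (ℓ²-operator) norm. In particular the graph filter g(L) = (I_M + αL)⁻¹ is linearly stable to perturbations of the graph shift operator with stability constant α. -/
/-!
Write `A = I + αL` and `B = I + αL_p`. The resolvent identity
`A⁻¹ - B⁻¹ = A⁻¹ (B - A) B⁻¹ = -α A⁻¹ (L - L_p) B⁻¹` reduces the claim to
`‖A⁻¹‖₂, ‖B⁻¹‖₂ ≤ 1`.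
That bound holds for `(I + T)⁻¹` with `T` any positive operator: from
`‖x‖² ≤ re ⟪x, x + T x⟫ ≤ ‖x‖ ‖x + T x‖` we get `‖x‖ ≤ ‖(I + T) x‖`.
-/

open Matrix
open scoped ComplexOrder

namespace ContinuousLinearMap

variable {𝕜 E : Type*} [RCLike 𝕜] [NormedAddCommGroup E] [InnerProductSpace 𝕜 E]

theorem IsPositive.norm_le_norm_add_apply {T : E →L[𝕜] E} (hT : T.IsPositive) (x : E) :
    ‖x‖ ≤ ‖x + T x‖ := by
  have hsq : ‖x‖ * ‖x‖ ≤ ‖x‖ * ‖x + T x‖ :=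
    calc ‖x‖ * ‖x‖ = RCLike.re (inner 𝕜 x x) := by rw [← sq, inner_self_eq_norm_sq]
      _ ≤ RCLike.re (inner 𝕜 x x) + RCLike.re (inner 𝕜 x (T x)) :=
        le_add_of_nonneg_right (hT.re_inner_nonneg_right x)
      _ = RCLike.re (inner 𝕜 x (x + T x)) := by rw [inner_add_right, map_add]
      _ ≤ ‖x‖ * ‖x + T x‖ := re_inner_le_norm _ _
  rcases (norm_nonneg x).eq_or_lt with hx | hx
  · exact hx ▸ norm_nonneg _
  · exact le_of_mul_le_mul_left hsq hx

theorem IsPositive.norm_le_one_of_one_add_mul_eq_one {T R : E →L[𝕜] E} (hT : T.IsPositive)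
    (hR : (1 + T) * R = 1) : ‖R‖ ≤ 1 :=
  opNorm_le_bound _ zero_le_one fun y => by
    have hy : R y + T (R y) = y := by simpa using congr($hR y)
    simpa [hy] using hT.norm_le_norm_add_apply (R y)

end ContinuousLinearMap

namespace Matrix.PosSemidef

variable {𝕜 n : Type*} [RCLike 𝕜] [Fintype n] [DecidableEq n] {P : Matrix n n 𝕜}

theorem isPositive_toEuclideanCLM (hP : P.PosSemidef) :
    (Matrix.toEuclideanCLM (𝕜 := 𝕜) P).IsPositive := by
  rw [← ContinuousLinearMap.isPositive_toLinearMap_iff, coe_toEuclideanCLM_eq_toEuclideanLin]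
  exact isPositive_toEuclideanLin_iff.mpr hP

theorem isUnit_one_add (hP : P.PosSemidef) : IsUnit (1 + P) :=
  (PosDef.one.add_posSemidef hP).isUnit

theorem norm_toEuclideanCLM_inv_one_add_le (hP : P.PosSemidef) :
    ‖Matrix.toEuclideanCLM (n := n) (𝕜 := 𝕜) (1 + P)⁻¹‖ ≤ 1 := by
  refine hP.isPositive_toEuclideanCLM.norm_le_one_of_one_add_mul_eq_one ?_
  rw [← map_one (Matrix.toEuclideanCLM (n := n) (𝕜 := 𝕜)), ← map_add, ← map_mul,
    mul_nonsing_inv _ ((isUnit_iff_isUnit_det _).mp hP.isUnit_one_add), map_one]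

end Matrix.PosSemidef

/-- **Linear stability of the graph filter to topology perturbations.**
For real symmetric positive semidefinite Laplacians `L`, `L_p` and `α ≥ 0`,
`‖(I + αL)⁻¹ − (I + αL_p)⁻¹‖₂ ≤ α‖L − L_p‖₂` in the spectral (ℓ²-operator) norm. -/
theorem graphFilter_linearly_stable
    (M : ℕ) (L Lp : Matrix (Fin M) (Fin M) ℝ)
    (hL : L.PosSemidef) (hLp : Lp.PosSemidef)
    (α : ℝ) (hα : 0 ≤ α) :
    ‖Matrix.toEuclideanCLM (𝕜 := ℝ) ((1 + α • L)⁻¹ - (1 + α • Lp)⁻¹)‖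
      ≤ α * ‖Matrix.toEuclideanCLM (𝕜 := ℝ) (L - Lp)‖ := by
  have hαL := hL.smul hα
  have hαLp := hLp.smul hα
  have hdiff : (1 + α • Lp) - (1 + α • L) = -(α • (L - Lp)) := by module
  rw [inv_sub_inv (iff_of_true hαL.isUnit_one_add hαLp.isUnit_one_add), hdiff, map_mul, map_mul]
  calc _ ≤ _ := norm_mul₃_le
    _ ≤ 1 * ‖Matrix.toEuclideanCLM (𝕜 := ℝ) (-(α • (L - Lp)))‖ * 1 := by
      gcongr
      exacts [hαL.norm_toEuclideanCLM_inv_one_add_le, hαLp.norm_toEuclideanCLM_inv_one_add_le]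
    _ = α * ‖Matrix.toEuclideanCLM (𝕜 := ℝ) (L - Lp)‖ := by
      rw [one_mul, mul_one, map_neg, norm_neg, map_smul, norm_smul, Real.norm_of_nonneg hα]
end

section
/- Let A and A_g be real positive definite n×n matrices, F and F_g real symmetric m×m matrices, and D, D_g real n×m matrices. Suppose the block matrix [[A, D],[Dᵀ, F]] minus the block matrix [[A_g, D_g],[D_gᵀ, F_g]] is positive semidefinite, and that [[A_g, D_g],[D_gᵀ, F_g]] is positive semidefinite. Then the difference of Schur complements (F − Dᵀ A⁻¹ D) − (F_g − D_gᵀ A_g⁻¹ D_g) is positive semidefinite; in particular tr(F − Dᵀ A⁻¹ D) ≥ tr(F_g − D_gᵀ A_g⁻¹ D_g). -/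
/-!
For `A` positive definite, the quadratic form of the Schur complement `S = D - Bᴴ A⁻¹ B` is the
block form minimised over the first block: `y* S y = min_x q_M (x, y)` for
`M = [[A, B], [Bᴴ, D]]`, the minimum being attained at `x = -A⁻¹ B y`. Evaluating at the
minimiser `x` for `M`, if `M - M'` is positive semidefinite then
`y* S y = q_M (x, y) ≥ q_M' (x, y) ≥ y* S' y`.
-/

open Matrix

namespace Matrix

variable {m n R : Type*} [Fintype m] [DecidableEq m] [CommRing R] [StarRing R]

theorem isHermitian_schur_complement_sub {A A' : Matrix m m R} (hA : A.IsHermitian)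
    (hA' : A'.IsHermitian) {B B' : Matrix m n R} {D D' : Matrix n n R}
    (h : (fromBlocks A B Bᴴ D - fromBlocks A' B' B'ᴴ D').IsHermitian) :
    ((D - Bᴴ * A⁻¹ * B) - (D' - B'ᴴ * A'⁻¹ * B')).IsHermitian := by
  have hD : (D - D').IsHermitian :=
    IsHermitian.ext fun i j => by simpa using h.apply (Sum.inr i) (Sum.inr j)
  have hBAB := isHermitian_conjTranspose_mul_mul B hA.inv
  have hBAB' := isHermitian_conjTranspose_mul_mul B' hA'.inv
  convert (hD.sub hBAB).add hBAB' using 1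
  abel

variable [Fintype n]

theorem schur_complement_dotProduct_mulVec_eq {A : Matrix m m R} [Invertible A]
    (hA : A.IsHermitian) (B : Matrix m n R) (D : Matrix n n R) (y : n → R) :
    star y ⬝ᵥ (D - Bᴴ * A⁻¹ * B) *ᵥ y =
      star (-((A⁻¹ * B) *ᵥ y) ⊕ᵥ y) ⬝ᵥ fromBlocks A B Bᴴ D *ᵥ (-((A⁻¹ * B) *ᵥ y) ⊕ᵥ y) := by
  rw [dotProduct_mulVec (star (_ ⊕ᵥ y)), schur_complement_eq₁₁ B D _ _ hA, neg_add_cancel,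
    dotProduct_zero, zero_add, dotProduct_mulVec]

variable [PartialOrder R] [StarOrderedRing R]

theorem schur_complement_dotProduct_mulVec_le {A : Matrix m m R} [Invertible A]
    (hA : A.PosDef) (B : Matrix m n R) (D : Matrix n n R) (x : m → R) (y : n → R) :
    star y ⬝ᵥ (D - Bᴴ * A⁻¹ * B) *ᵥ y ≤ star (x ⊕ᵥ y) ⬝ᵥ fromBlocks A B Bᴴ D *ᵥ (x ⊕ᵥ y) := by
  rw [dotProduct_mulVec (star (x ⊕ᵥ y)), schur_complement_eq₁₁ B D _ _ hA.1,
    ← dotProduct_mulVec, ← dotProduct_mulVec]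
  exact le_add_of_nonneg_left (hA.posSemidef.dotProduct_mulVec_nonneg _)

theorem PosSemidef.schur_complement_sub {A A' : Matrix m m R} [Invertible A] [Invertible A']
    (hA : A.PosDef) (hA' : A'.PosDef) {B B' : Matrix m n R} {D D' : Matrix n n R}
    (h : (fromBlocks A B Bᴴ D - fromBlocks A' B' B'ᴴ D').PosSemidef) :
    ((D - Bᴴ * A⁻¹ * B) - (D' - B'ᴴ * A'⁻¹ * B')).PosSemidef := by
  refine .of_dotProduct_mulVec_nonneg (isHermitian_schur_complement_sub hA.1 hA'.1 h.1)
    fun y => ?_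
  set v := -((A⁻¹ * B) *ᵥ y) ⊕ᵥ y
  have hv := h.dotProduct_mulVec_nonneg v
  rw [sub_mulVec, dotProduct_sub, sub_nonneg] at hv
  rw [sub_mulVec, dotProduct_sub, sub_nonneg, schur_complement_dotProduct_mulVec_eq hA.1]
  exact (schur_complement_dotProduct_mulVec_le hA' B' D' _ y).trans hv

end Matrix

theorem schur_complement_monotone_general
    (n m : ℕ)
    (A Ag : Matrix (Fin n) (Fin n) ℝ) (hA : A.PosDef) (hAg : Ag.PosDef)
    (F Fg : Matrix (Fin m) (Fin m) ℝ)
    (D Dg : Matrix (Fin n) (Fin m) ℝ)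
    (hdiff : (Matrix.fromBlocks A D Dᵀ F - Matrix.fromBlocks Ag Dg Dgᵀ Fg).PosSemidef) :
    ((F - Dᵀ * A⁻¹ * D) - (Fg - Dgᵀ * Ag⁻¹ * Dg)).PosSemidef ∧
      (Fg - Dgᵀ * Ag⁻¹ * Dg).trace ≤ (F - Dᵀ * A⁻¹ * D).trace := by
  let := hA.isUnit.invertible
  let := hAg.isUnit.invertible
  simp only [← conjTranspose_eq_transpose_of_trivial] at hdiff ⊢
  have hS := hdiff.schur_complement_sub hA hAg
  refine ⟨hS, sub_nonneg.1 ?_⟩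
  rw [← trace_sub]
  exact hS.trace_nonneg

/-- **Monotonicity of the Schur complement (inference-step inequality of Theorem 2).**
If `[[A, D],[Dᵀ, F]] - [[A_g, D_g],[D_gᵀ, F_g]]` is positive semidefinite, the latter block
matrix is positive semidefinite, and `A`, `A_g` are positive definite, then
`(F - Dᵀ A⁻¹ D) - (F_g - D_gᵀ A_g⁻¹ D_g)` is positive semidefinite; in particular
`tr(F - Dᵀ A⁻¹ D) ≥ tr(F_g - D_gᵀ A_g⁻¹ D_g)`. -/
theorem schur_complement_monotone
    (n m : ℕ)
    (A Ag : Matrix (Fin n) (Fin n) ℝ) (hA : A.PosDef) (hAg : Ag.PosDef)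
    (F Fg : Matrix (Fin m) (Fin m) ℝ) (hF : F.IsHermitian) (hFg : Fg.IsHermitian)
    (D Dg : Matrix (Fin n) (Fin m) ℝ)
    (hdiff : (Matrix.fromBlocks A D Dᵀ F - Matrix.fromBlocks Ag Dg Dgᵀ Fg).PosSemidef)
    (hg : (Matrix.fromBlocks Ag Dg Dgᵀ Fg).PosSemidef) :
    ((F - Dᵀ * A⁻¹ * D) - (Fg - Dgᵀ * Ag⁻¹ * Dg)).PosSemidef ∧
      (Fg - Dgᵀ * Ag⁻¹ * Dg).trace ≤ (F - Dᵀ * A⁻¹ * D).trace :=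
  schur_complement_monotone_general n m A Ag hA hAg F Fg D Dg hdiff
end

section
/- Let C and C_g be real symmetric positive semidefinite M×M matrices with C − C_g positive semidefinite, and let σ² > 0. Then the Kalman-updated covariances preserve the ordering: (C − C (C + σ²I_M)⁻¹ C) − (C_g − C_g (C_g + σ²I_M)⁻¹ C_g) is positive semidefinite; in particular tr(C − C (C + σ²I_M)⁻¹ C) ≥ tr(C_g − C_g (C_g + σ²I_M)⁻¹ C_g). -/
/-!
With `A = C + σ²I` one has `C - C A⁻¹ C = σ²I - σ⁴ A⁻¹`, so the ordering of the updated covariances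
is the antitonicity of inversion on positive definite matrices, applied to `Cg + σ²I ≤ C + σ²I`.
-/

namespace Matrix

variable {n : Type*} [Fintype n] [DecidableEq n]

-- Both differences are Schur complements of the block matrix `[A, 1; 1, B⁻¹]`.
theorem PosDef.posSemidef_inv_sub_inv {K : Type*} [Field K] [PartialOrder K] [StarRing K]
    [StarOrderedRing K] {A B : Matrix n n K} (hB : B.PosDef) (hAB : (A - B).PosSemidef) :
    (B⁻¹ - A⁻¹).PosSemidef := by
  have hA : A.PosDef := by simpa only [add_sub_cancel] using hB.add_posSemidef hAB
  have := hA.isUnit.invertible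
  have := hB.isUnit.invertible
  have := hB.inv.isUnit.invertible
  have h₁₁ := hA.fromBlocks₁₁ (1 : Matrix n n K) B⁻¹
  have h₂₂ := hB.inv.fromBlocks₂₂ A (1 : Matrix n n K)
  simp only [conjTranspose_one, one_mul, mul_one, inv_inv_of_invertible] at h₁₁ h₂₂
  exact h₁₁.mp (h₂₂.mpr hAB)

/-- The posterior covariance `Cᵉ` of the update step, for prior `P` and noise variance `s`. -/
noncomputable def kalmanUpdate {R : Type*} [CommRing R] (P : Matrix n n R) (s : R) : Matrix n n R :=
  P - P * (P + s • 1)⁻¹ * P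

theorem kalmanUpdate_eq_smul_sub_smul_inv {R : Type*} [CommRing R] {P : Matrix n n R} {s : R}
    (h : IsUnit (P + s • 1)) : kalmanUpdate P s = s • 1 - (s * s) • (P + s • 1)⁻¹ := by
  unfold kalmanUpdate
  obtain ⟨A, rfl⟩ : ∃ A, P = A - s • 1 := ⟨P + s • 1, by abel⟩
  rw [sub_add_cancel] at h ⊢
  have hA := (isUnit_iff_isUnit_det A).mp h
  simp only [Matrix.sub_mul, Matrix.mul_sub, Matrix.smul_mul, Matrix.mul_smul, Matrix.one_mul,
    Matrix.mul_one, mul_nonsing_inv A hA, nonsing_inv_mul A hA, smul_smul, smul_sub]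
  abel

theorem PosSemidef.kalmanUpdate_sub {P Q : Matrix n n ℝ} (hQ : Q.PosSemidef)
    (hPQ : (P - Q).PosSemidef) {s : ℝ} (hs : 0 < s) :
    (kalmanUpdate P s - kalmanUpdate Q s).PosSemidef := by
  have hQs : (Q + s • 1).PosDef := PosDef.posSemidef_add hQ (PosDef.one.smul hs)
  have hPQs : (P + s • 1 - (Q + s • 1)).PosSemidef := by rwa [add_sub_add_right_eq_sub]
  have hPs : (P + s • 1).PosDef := by
    simpa only [add_sub_cancel] using hQs.add_posSemidef hPQs
  rw [kalmanUpdate_eq_smul_sub_smul_inv hPs.isUnit, kalmanUpdate_eq_smul_sub_smul_inv hQs.isUnit,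
    sub_sub_sub_cancel_left, ← smul_sub]
  exact (hQs.posSemidef_inv_sub_inv hPQs).smul (mul_self_nonneg s)

end Matrix

open Matrix

theorem kalman_update_monotone_general
    (M : ℕ) (C Cg : Matrix (Fin M) (Fin M) ℝ)
    (hCg : Cg.PosSemidef) (hle : (C - Cg).PosSemidef)
    (σ2 : ℝ) (hσ2 : 0 < σ2) :
    ((C - C * (C + σ2 • 1)⁻¹ * C) - (Cg - Cg * (Cg + σ2 • 1)⁻¹ * Cg)).PosSemidef ∧
      (Cg - Cg * (Cg + σ2 • 1)⁻¹ * Cg).trace ≤ (C - C * (C + σ2 • 1)⁻¹ * C).trace := by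
  have h : (kalmanUpdate C σ2 - kalmanUpdate Cg σ2).PosSemidef := hCg.kalmanUpdate_sub hle hσ2
  exact ⟨h, sub_nonneg.mp (trace_sub (kalmanUpdate C σ2) _ ▸ h.trace_nonneg)⟩

/-- **Loewner monotonicity of the Kalman update (update-step ingredient of Theorem 2).**
If `C` and `C_g` are real symmetric positive semidefinite with `C - C_g` positive
semidefinite and `σ² > 0`, then
`(C - C(C + σ²I)⁻¹C) - (C_g - C_g(C_g + σ²I)⁻¹C_g)` is positive semidefinite; in particular
the corresponding trace inequality holds. -/
theorem kalman_update_monotone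
    (M : ℕ) (C Cg : Matrix (Fin M) (Fin M) ℝ)
    (hC : C.PosSemidef) (hCg : Cg.PosSemidef) (hle : (C - Cg).PosSemidef)
    (σ2 : ℝ) (hσ2 : 0 < σ2) :
    ((C - C * (C + σ2 • 1)⁻¹ * C) - (Cg - Cg * (Cg + σ2 • 1)⁻¹ * Cg)).PosSemidef ∧
      (Cg - Cg * (Cg + σ2 • 1)⁻¹ * Cg).trace ≤ (C - C * (C + σ2 • 1)⁻¹ * C).trace :=
  kalman_update_monotone_general M C Cg hCg hle σ2 hσ2
end
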